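/- There exist a function f : ℕ → ℕ and a polynomial p such that for all sequential vset-automata A1 and A2 there exists a sequential vset-automaton A with ⟦A⟧(d) = ⟦A1 ⋈ A2⟧(d) for every document d, whose total size (number of states plus number of transitions) is at most f(k)·p(size of A1 + size of A2), where k = |Vars(A1) ∩ Vars(A2)|. -/

import Mathlib

namespace Spanners

open scoped Classical

/-! ### Spans and mappings -/

abbrev Span := ℕ × ℕ

abbrev VMapping := ℕ → Option Span

def emptyMapping : VMapping := fun _ => none

def mapDom (μ : VMapping) : Set ℕ := {x | μ x ≠ none}

/-- Two mappings are compatible if they agree on every common variable. -/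
def Compatible (μ1 μ2 : VMapping) : Prop :=
  ∀ x s1 s2, μ1 x = some s1 → μ2 x = some s2 → s1 = s2

def DisjointDom (μ1 μ2 : VMapping) : Prop :=
  ∀ x, μ1 x = none ∨ μ2 x = none

def munion (μ1 μ2 : VMapping) : VMapping := fun x =>
  match μ1 x with
  | some s => some s
  | none => μ2 x

def minsert (x : ℕ) (s : Span) (μ : VMapping) : VMapping :=
  fun y => if y = x then some s else μ y

/-- Natural join of two sets of mappings. -/
def joinSet (S1 S2 : Set VMapping) : Set VMapping :=
  {μ | ∃ μ1 ∈ S1, ∃ μ2 ∈ S2, Compatible μ1 μ2 ∧ μ = munion μ1 μ2}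

/-- Difference of two sets of mappings. -/
def diffSet (S1 S2 : Set VMapping) : Set VMapping :=
  {μ1 | μ1 ∈ S1 ∧ ∀ μ2 ∈ S2, ¬ Compatible μ1 μ2}

/-- Restriction of a mapping to a set of variables. -/
noncomputable def restrictMap (μ : VMapping) (V : Set ℕ) : VMapping :=
  fun x => if x ∈ V then μ x else none

/-- Projection of a set of mappings to a set of variables. -/
def projSet (V : Set ℕ) (S : Set VMapping) : Set VMapping :=
  {μ' | ∃ μ ∈ S, μ' = restrictMap μ V}

/-! ### Regex formulas -/

inductive RGX (Sig : Type) where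
  | empty : RGX Sig
  | eps : RGX Sig
  | letter : Sig → RGX Sig
  | union : RGX Sig → RGX Sig → RGX Sig
  | concat : RGX Sig → RGX Sig → RGX Sig
  | star : RGX Sig → RGX Sig
  | bind : ℕ → RGX Sig → RGX Sig

variable {Sig : Type}

def RGX.vars : RGX Sig → Finset ℕ
  | .empty => ∅
  | .eps => ∅
  | .letter _ => ∅
  | .union a b => a.vars ∪ b.vars
  | .concat a b => a.vars ∪ b.vars
  | .star a => a.vars
  | .bind x a => insert x a.vars

def RGX.size : RGX Sig → ℕ
  | .empty => 1
  | .eps => 1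
  | .letter _ => 1
  | .union a b => a.size + b.size + 1
  | .concat a b => a.size + b.size + 1
  | .star a => a.size + 1
  | .bind _ a => a.size + 1

/-- The schemaless semantics `⟨α⟩(d)`: `RMatch α d i j μ` means `([i,j⟩, μ) ∈ ⟨α⟩(d)`. -/
inductive RMatch : RGX Sig → List Sig → ℕ → ℕ → VMapping → Prop where
  | eps {d : List Sig} {i : ℕ} (h1 : 1 ≤ i) (h2 : i ≤ d.length + 1) :
      RMatch .eps d i i emptyMapping
  | letter {d : List Sig} {i : ℕ} {σ : Sig} (h1 : 1 ≤ i) (h2 : d[i - 1]? = some σ) :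
      RMatch (.letter σ) d i (i + 1) emptyMapping
  | unionL {a b : RGX Sig} {d : List Sig} {i j : ℕ} {μ : VMapping}
      (h : RMatch a d i j μ) : RMatch (.union a b) d i j μ
  | unionR {a b : RGX Sig} {d : List Sig} {i j : ℕ} {μ : VMapping}
      (h : RMatch b d i j μ) : RMatch (.union a b) d i j μ
  | concat {a b : RGX Sig} {d : List Sig} {i k j : ℕ} {μ1 μ2 : VMapping}
      (h1 : RMatch a d i k μ1) (h2 : RMatch b d k j μ2) (hd : DisjointDom μ1 μ2) :
      RMatch (.concat a b) d i j (munion μ1 μ2)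
  | bind {x : ℕ} {a : RGX Sig} {d : List Sig} {i j : ℕ} {μ : VMapping}
      (h : RMatch a d i j μ) (hx : μ x = none) :
      RMatch (.bind x a) d i j (minsert x (i, j) μ)
  | starNil {a : RGX Sig} {d : List Sig} {i : ℕ} (h1 : 1 ≤ i) (h2 : i ≤ d.length + 1) :
      RMatch (.star a) d i i emptyMapping
  | starCons {a : RGX Sig} {d : List Sig} {i k j : ℕ} {μ1 μ2 : VMapping}
      (h1 : RMatch a d i k μ1) (h2 : RMatch (.star a) d k j μ2) (hd : DisjointDom μ1 μ2) :
      RMatch (.star a) d i j (munion μ1 μ2)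

/-- `⟦α⟧(d)`: mappings extracted with the full span. -/
def rgxSem (α : RGX Sig) (d : List Sig) : Set VMapping :=
  {μ | RMatch α d 1 (d.length + 1) μ}

/-- Sequential regex formulas. -/
def RGX.Sequential : RGX Sig → Prop
  | .empty => True
  | .eps => True
  | .letter _ => True
  | .union a b => a.Sequential ∧ b.Sequential
  | .concat a b => a.Sequential ∧ b.Sequential ∧ Disjoint a.vars b.vars
  | .star a => a.Sequential ∧ a.vars = ∅
  | .bind x a => a.Sequential ∧ x ∉ a.vars

/-- Variable-free words over the alphabet (built from ε, letters and concatenation). -/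
inductive RGX.IsWord : RGX Sig → Prop where
  | eps : RGX.IsWord .eps
  | letter (σ : Sig) : RGX.IsWord (.letter σ)
  | concat {a b : RGX Sig} : a.IsWord → b.IsWord → RGX.IsWord (.concat a b)

/-- Functional for a set `V` of variables. -/
inductive FunctionalFor : RGX Sig → Finset ℕ → Prop where
  | word {α : RGX Sig} (h : α.IsWord) : FunctionalFor α ∅
  | union {a b : RGX Sig} {V : Finset ℕ} (ha : FunctionalFor a V) (hb : FunctionalFor b V) :
      FunctionalFor (.union a b) V
  | concat {a b : RGX Sig} {V : Finset ℕ} (V1 : Finset ℕ) (hsub : V1 ⊆ V)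
      (ha : FunctionalFor a V1) (hb : FunctionalFor b (V \ V1)) :
      FunctionalFor (.concat a b) V
  | star {a : RGX Sig} (h : FunctionalFor a ∅) : FunctionalFor (.star a) ∅
  | bind {x : ℕ} {a : RGX Sig} {V : Finset ℕ} (h : FunctionalFor a (V.erase x)) :
      FunctionalFor (.bind x a) V

def RGX.Functional (α : RGX Sig) : Prop := FunctionalFor α α.vars

/-- Disjunctive functional regex formulas: finite disjunctions of functional regex formulas. -/
inductive DisjFunctional : RGX Sig → Prop where
  | base {γ : RGX Sig} (h : γ.Functional) : DisjFunctional γ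
  | union {a b : RGX Sig} (ha : DisjFunctional a) (hb : DisjFunctional b) :
      DisjFunctional (.union a b)

/-- Number of disjuncts of a (disjunctive) regex formula. -/
def countDisjuncts : RGX Sig → ℕ
  | .union a b => countDisjuncts a + countDisjuncts b
  | _ => 1

/-- Disjunction-free regex formulas. -/
def RGX.DisjFree : RGX Sig → Prop
  | .union _ _ => False
  | .concat a b => a.DisjFree ∧ b.DisjFree
  | .star a => a.DisjFree
  | .bind _ a => a.DisjFree
  | _ => True

/-- `γ` is synchronized for `x`: no subformula `γ1 ∨ γ2` contains `x`. -/
def RGX.SyncFor : RGX Sig → ℕ → Prop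
  | .union a b, x => (x ∉ a.vars ∧ x ∉ b.vars) ∧ a.SyncFor x ∧ b.SyncFor x
  | .concat a b, x => a.SyncFor x ∧ b.SyncFor x
  | .star a, x => a.SyncFor x
  | .bind _ a, x => a.SyncFor x
  | _, _ => True

/-- Concatenation of a list of regex formulas. -/
def concatList : List (RGX Sig) → RGX Sig
  | [] => .eps
  | [α] => α
  | α :: rest => .concat α (concatList rest)

/-- Disjunction of a list of regex formulas. -/
def disjList : List (RGX Sig) → RGX Sig
  | [] => .empty
  | [α] => α
  | α :: rest => .union α (disjList rest)

/-! ### vset-automata -/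

inductive VLabel (Sig : Type) where
  | eps : VLabel Sig
  | letter : Sig → VLabel Sig
  | openv : ℕ → VLabel Sig
  | closev : ℕ → VLabel Sig
deriving DecidableEq

structure VA (Sig : Type) [DecidableEq Sig] where
  q0 : ℕ
  F : Finset ℕ
  δ : Finset (ℕ × VLabel Sig × ℕ)

variable [DecidableEq Sig]

/-- The states of a VA: the initial state and all states mentioned in `F` or in transitions. -/
def statesOf (A : VA Sig) : Finset ℕ :=
  insert A.q0 (A.F ∪ A.δ.image (fun t => t.1) ∪ A.δ.image (fun t => t.2.2))

def labelVars : VLabel Sig → Finset ℕ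
  | .openv x => {x}
  | .closev x => {x}
  | _ => ∅

/-- `Vars(A)`: the variables mentioned in the transitions of `A`. -/
def varsOf (A : VA Sig) : Finset ℕ := A.δ.biUnion (fun t => labelVars t.2.1)

/-- Total size of a VA: number of states plus number of transitions. -/
def vaSize (A : VA Sig) : ℕ := (statesOf A).card + A.δ.card

/-- `A.PathFrom p ls q`: a path (run segment) from `p` to `q` with label sequence `ls`. -/
inductive VA.PathFrom (A : VA Sig) : ℕ → List (VLabel Sig) → ℕ → Prop where
  | nil (q : ℕ) : VA.PathFrom A q [] q
  | cons {p q r : ℕ} {l : VLabel Sig} {ls : List (VLabel Sig)}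
      (h : (p, l, q) ∈ A.δ) (htail : VA.PathFrom A q ls r) : VA.PathFrom A p (l :: ls) r

/-- The word (document) read by a sequence of labels. -/
def readWord : List (VLabel Sig) → List Sig :=
  List.filterMap fun l => match l with
    | VLabel.letter σ => some σ
    | _ => none

def isLetterL : VLabel Sig → Bool
  | .letter _ => true
  | _ => false

/-- The current position in the document just before executing the `k`-th label. -/
def posAt (ls : List (VLabel Sig)) (k : ℕ) : ℕ := 1 + (ls.take k).countP isLetterL

/-- Validity of a run, given by its label sequence. -/
def ValidLabels (ls : List (VLabel Sig)) : Prop :=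
  ∀ x : ℕ,
    ls.count (VLabel.openv x) ≤ 1 ∧
    ls.count (VLabel.closev x) ≤ 1 ∧
    ((VLabel.openv x) ∈ ls ↔ (VLabel.closev x) ∈ ls) ∧
    ∀ i j : ℕ, ls[i]? = some (VLabel.openv x) → ls[j]? = some (VLabel.closev x) →
      posAt ls i ≤ posAt ls j

/-- The mapping `μ_ρ` extracted from a (valid accepting) run with label sequence `ls`. -/
def runMapping (ls : List (VLabel Sig)) : VMapping := fun x =>
  if (VLabel.openv x) ∈ ls then
    some (posAt ls (ls.idxOf (VLabel.openv x)), posAt ls (ls.idxOf (VLabel.closev x)))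
  else none

/-- `ls` is the label sequence of an accepting run of `A`. -/
def AcceptsWith (A : VA Sig) (ls : List (VLabel Sig)) : Prop :=
  ∃ qf, VA.PathFrom A A.q0 ls qf ∧ qf ∈ A.F

/-- `⟦A⟧(d)`. -/
def vaSem (A : VA Sig) (d : List Sig) : Set VMapping :=
  {μ | ∃ ls, AcceptsWith A ls ∧ readWord ls = d ∧ ValidLabels ls ∧ μ = runMapping ls}

/-- A VA is sequential if all of its accepting runs are valid. -/
def VA.Sequential (A : VA Sig) : Prop := ∀ ls, AcceptsWith A ls → ValidLabels ls

/-- A run from the initial state to `q` that is a prefix of an accepting run. -/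
def PrefixRun (A : VA Sig) (ls : List (VLabel Sig)) (q : ℕ) : Prop :=
  VA.PathFrom A A.q0 ls q ∧ ∃ ls' qf, VA.PathFrom A q ls' qf ∧ qf ∈ A.F

/-- `A` is semi-functional for the variable `x`: no state has extended configuration `d`. -/
def SemiFunctionalFor (A : VA Sig) (x : ℕ) : Prop :=
  ¬ ∃ q ls1 ls2, PrefixRun A ls1 q ∧ PrefixRun A ls2 q ∧
      (VLabel.closev x) ∈ ls1 ∧ (VLabel.openv x) ∉ ls2

def SemiFunctionalForSet (A : VA Sig) (X : Finset ℕ) : Prop :=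
  ∀ x ∈ X, SemiFunctionalFor A x

/-- Functional VA: sequential, and every accepting run opens and closes every variable. -/
def FunctionalVA (A : VA Sig) : Prop :=
  A.Sequential ∧ ∀ ls, AcceptsWith A ls → ∀ x ∈ varsOf A,
    (VLabel.openv x) ∈ ls ∧ (VLabel.closev x) ∈ ls

/-- `l` has a unique target state in `A`. -/
def UniqueTarget (A : VA Sig) (l : VLabel Sig) : Prop :=
  ∃ qt : ℕ, ∀ p q : ℕ, (p, l, q) ∈ A.δ → q = qt

/-- `A` is synchronized for the variable `x`. -/
def SyncForVA (A : VA Sig) (x : ℕ) : Prop :=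
  UniqueTarget A (VLabel.openv x) ∧ UniqueTarget A (VLabel.closev x) ∧
    ((∀ ls, AcceptsWith A ls → (VLabel.openv x) ∈ ls ∧ (VLabel.closev x) ∈ ls) ∨
     (∀ ls, AcceptsWith A ls → (VLabel.openv x) ∉ ls ∧ (VLabel.closev x) ∉ ls))

/-- `A` is the disjunctive functional VA with functional components `parts`. -/
def DisjFunctionalVAWith (A : VA Sig) (parts : List (VA Sig)) : Prop :=
  (∀ B ∈ parts, FunctionalVA B) ∧
  (parts.Pairwise fun B C => Disjoint (statesOf B) (statesOf C)) ∧
  (∀ B ∈ parts, A.q0 ∉ statesOf B) ∧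
  A.F = parts.foldr (fun B s => B.F ∪ s) (∅ : Finset ℕ) ∧
  A.δ = (parts.map (fun B => (A.q0, (VLabel.eps : VLabel Sig), B.q0))).toFinset
        ∪ parts.foldr (fun B s => B.δ ∪ s) (∅ : Finset (ℕ × VLabel Sig × ℕ))

def DisjFunctionalVA (A : VA Sig) : Prop := ∃ parts, DisjFunctionalVAWith A parts

/-! ### 3CNF formulas -/

/-- A 3CNF clause over `n` Boolean variables: a triple of literals; `(i, true)` is `xᵢ`,
`(i, false)` is `¬xᵢ`. -/
def Clause3 (n : ℕ) : Type := (Fin n × Bool) × (Fin n × Bool) × (Fin n × Bool)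

def litsOf {n : ℕ} (c : Clause3 n) : List (Fin n × Bool) := [c.1, c.2.1, c.2.2]

def clauseSat {n : ℕ} (τ : Fin n → Bool) (c : Clause3 n) : Prop :=
  ∃ l ∈ litsOf c, τ l.1 = l.2

def Sat3 {n m : ℕ} (φ : Fin m → Clause3 n) : Prop :=
  ∃ τ : Fin n → Bool, ∀ j, clauseSat τ (φ j)

end Spanners

/-!
The join is computed by a product automaton running `A1` and `A2` side by side: both read each
letter together, while their ε-moves and variable operations are interleaved freely. Only the
`k` common variables need coordination, and for each of them the product remembers one of 18
statuses: which operations each component has performed so far, or that one component, the only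
one using the variable, has claimed it. A shared operation is emitted as soon as one component
performs it, and a letter may only be read when the two components agree on every status, so
both runs give the variable the same span. Hence the product has at most `18 ^ k · |Q1| · |Q2|`
states, and polynomially many transitions in that number.

Soundness is an invariant relating, for every variable, its opening and closing positions in the
two component runs and in the joint run. Completeness merges two compatible valid runs by
reading, between consecutive letters, first the non-letters of the first run and then those of
the second; the statuses along this merge are determined by the prefixes read so far.
-/

namespace Spanners

/-! ### Labels and positions -/

variable {Sig : Type}

def posEnd (ls : List (VLabel Sig)) : ℕ := 1 + ls.countP isLetterL

theorem readWord_append (u v : List (VLabel Sig)) :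
    readWord (u ++ v) = readWord u ++ readWord v := by
  simp [readWord]

theorem readWord_singleton_of_not_letter {l : VLabel Sig} (hl : isLetterL l = false) :
    readWord [l] = [] := by
  cases l <;> simp_all [readWord, isLetterL]

theorem posEnd_eq_length_readWord (ls : List (VLabel Sig)) :
    posEnd ls = 1 + (readWord ls).length := by
  induction ls with
  | nil => simp [posEnd, readWord]
  | cons a t ih =>
    cases a <;> simp_all [posEnd, readWord, isLetterL, List.countP_cons]

theorem posEnd_snoc_of_not_letter {l : VLabel Sig} (hl : isLetterL l = false)
    (ls : List (VLabel Sig)) : posEnd (ls ++ [l]) = posEnd ls := by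
  simp [posEnd, hl]

theorem readWord_cons_of_not_letter {l : VLabel Sig} (hl : isLetterL l = false)
    (r : List (VLabel Sig)) : readWord (l :: r) = readWord r := by
  cases l <;> simp_all [readWord, isLetterL]

theorem head_cases {r1 r2 : List (VLabel Sig)} (hw : readWord r1 = readWord r2) :
    (∃ l r, r1 = l :: r ∧ isLetterL l = false) ∨ (∃ l r, r2 = l :: r ∧ isLetterL l = false) ∨
      (r1 = [] ∧ r2 = []) ∨
      ∃ σ t1 t2, r1 = .letter σ :: t1 ∧ r2 = .letter σ :: t2 ∧ readWord t1 = readWord t2 := by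
  rcases r1 with _ | ⟨l1, t1⟩
  · rcases r2 with _ | ⟨l2, t2⟩
    · exact .inr (.inr (.inl ⟨rfl, rfl⟩))
    · cases l2 <;> simp_all [readWord, isLetterL]
  cases l1 with
  | letter σ =>
    rcases r2 with _ | ⟨l2, t2⟩
    · simp [readWord] at hw
    · cases l2 <;> simp_all [readWord, isLetterL]
  | _ => simp [isLetterL]

def opLabel : Bool → ℕ → VLabel Sig
  | false, x => .openv x
  | true, x => .closev x

@[simp] theorem isLetterL_opLabel (k : Bool) (x : ℕ) :
    isLetterL (opLabel k x : VLabel Sig) = false := by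
  cases k <;> rfl

theorem opLabel_inj {j k : Bool} {x y : ℕ} :
    (opLabel j x : VLabel Sig) = opLabel k y ↔ j = k ∧ x = y := by
  cases j <;> cases k <;> simp [opLabel]

theorem eq_eps_or_opLabel {l : VLabel Sig} (hl : isLetterL l = false) :
    l = .eps ∨ ∃ k x, l = opLabel k x := by
  cases l with
  | eps => exact .inl rfl
  | letter => simp [isLetterL] at hl
  | openv x => exact .inr ⟨false, x, rfl⟩
  | closev x => exact .inr ⟨true, x, rfl⟩

def kindOf : VLabel Sig → ℕ → Option Bool
  | .openv x, y => if x = y then some false else none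
  | .closev x, y => if x = y then some true else none
  | _, _ => none

@[simp] theorem kindOf_eps (y : ℕ) : kindOf (.eps : VLabel Sig) y = none := rfl

@[simp] theorem kindOf_letter (σ : Sig) (y : ℕ) : kindOf (.letter σ) y = none := rfl

theorem kindOf_eq_some {l : VLabel Sig} {y : ℕ} {k : Bool} :
    kindOf l y = some k ↔ l = opLabel k y := by
  cases l <;> cases k <;> simp [kindOf, opLabel, eq_comm]

theorem kindOf_opLabel (k : Bool) (x y : ℕ) :
    kindOf (opLabel k x : VLabel Sig) y = if x = y then some k else none := by
  cases k <;> simp [kindOf, opLabel]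

theorem mem_labelVars_of_kindOf {l : VLabel Sig} {y : ℕ} (h : kindOf l y ≠ none) :
    y ∈ labelVars l := by
  cases l <;> simp_all [kindOf, labelVars]

def touches (ls : List (VLabel Sig)) (y : ℕ) : Prop := ∃ k, opLabel k y ∈ ls

theorem touches_snoc_of_kindOf {ls : List (VLabel Sig)} {l : VLabel Sig} {y : ℕ}
    (hl : kindOf l y = none) : touches (ls ++ [l]) y ↔ touches ls y := by
  refine exists_congr fun k => ?_
  have : l ≠ opLabel k y := fun h => by simp [kindOf_eq_some.2 h] at hl
  simp [Ne.symm this]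

theorem touches_snoc_opLabel (ls : List (VLabel Sig)) (k : Bool) (y : ℕ) :
    touches (ls ++ [opLabel k y]) y :=
  ⟨k, List.mem_append_right _ (List.mem_singleton_self _)⟩

theorem munion_apply (μ1 μ2 : VMapping) (x : ℕ) : munion μ1 μ2 x = (μ1 x).or (μ2 x) := by
  unfold munion; cases μ1 x <;> rfl

/-! ### Occurrences and traces -/

variable [DecidableEq Sig]

/-- The positions (in the sense of `posAt`) at which `l` occurs in `ls`, in order. -/
def occs : List (VLabel Sig) → VLabel Sig → List ℕ
  | [], _ => []
  | a :: t, l => (if a = l then [1] else []) ++ (occs t l).map (· + if isLetterL a then 1 else 0)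

@[simp] theorem occs_nil (l : VLabel Sig) : occs [] l = [] := rfl

theorem occs_cons (a l : VLabel Sig) (t : List (VLabel Sig)) :
    occs (a :: t) l =
      (if a = l then [1] else []) ++ (occs t l).map (· + if isLetterL a then 1 else 0) := rfl

theorem length_occs (ls : List (VLabel Sig)) (l : VLabel Sig) :
    (occs ls l).length = ls.count l := by
  induction ls with
  | nil => simp
  | cons a t ih => by_cases h : a = l <;> simp [occs_cons, h, ih]

theorem occs_eq_nil_iff {ls : List (VLabel Sig)} {l : VLabel Sig} : occs ls l = [] ↔ l ∉ ls := by
  rw [← List.length_eq_zero_iff, length_occs, List.count_eq_zero]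

theorem mem_occs {ls : List (VLabel Sig)} {l : VLabel Sig} {p : ℕ} :
    p ∈ occs ls l ↔ ∃ i, ls[i]? = some l ∧ posAt ls i = p := by
  induction ls generalizing p with
  | nil => simp
  | cons a t ih =>
    have hshift : ∀ i, posAt (a :: t) (i + 1) = posAt t i + if isLetterL a then 1 else 0 := by
      intro i; simp only [posAt, List.take_succ_cons, List.countP_cons]; omega
    constructor
    · rintro hp
      rcases List.mem_append.1 hp with h | h
      · by_cases hal : a = l
        · subst hal
          rw [if_pos rfl, List.mem_singleton] at h
          exact ⟨0, rfl, by simp [posAt, h]⟩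
        · simp [hal] at h
      · obtain ⟨q, hq, rfl⟩ := List.mem_map.1 h
        obtain ⟨i, hi, rfl⟩ := ih.1 hq
        exact ⟨i + 1, by simpa using hi, hshift i⟩
    · rintro ⟨_ | i, hi, rfl⟩
      · simp_all [occs_cons, posAt]
      · exact List.mem_append_right _ (List.mem_map.2 ⟨_, ih.2 ⟨i, by simpa using hi, rfl⟩,
          (hshift i).symm⟩)

theorem head?_occs {ls : List (VLabel Sig)} {l : VLabel Sig} (h : l ∈ ls) :
    (occs ls l).head? = some (posAt ls (ls.idxOf l)) := by
  induction ls with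
  | nil => simp at h
  | cons a t ih =>
    by_cases hal : a = l
    · subst hal; simp [occs_cons, posAt]
    · have hl : l ∈ t := (List.mem_cons.1 h).resolve_left (Ne.symm hal)
      rw [occs_cons, if_neg hal, List.idxOf_cons_ne _ (by simpa using hal)]
      simp only [List.nil_append, List.head?_map, ih hl, Option.map_some, posAt,
        List.take_succ_cons, List.countP_cons]
      congr 1
      omega

theorem occs_append (u v : List (VLabel Sig)) (l : VLabel Sig) :
    occs (u ++ v) l = occs u l ++ (occs v l).map (· + u.countP isLetterL) := by
  induction u with
  | nil => simp
  | cons a t ih =>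
    rw [List.cons_append, occs_cons, occs_cons, ih]
    simp only [List.map_append, List.map_map, List.append_assoc, List.countP_cons]
    congr 2
    exact List.map_congr_left fun q _ => by simp only [Function.comp_apply]; split <;> omega

theorem occs_snoc (ls : List (VLabel Sig)) (a l : VLabel Sig) :
    occs (ls ++ [a]) l = occs ls l ++ if a = l then [posEnd ls] else [] := by
  rw [occs_append]
  by_cases h : a = l <;> simp [occs_cons, h, posEnd]

theorem le_posEnd_of_mem_occs {ls : List (VLabel Sig)} {l : VLabel Sig} {p : ℕ}
    (h : p ∈ occs ls l) : p ≤ posEnd ls := by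
  obtain ⟨i, -, rfl⟩ := mem_occs.1 h
  exact Nat.add_le_add_left (List.take_sublist i ls).countP_le 1

theorem one_le_of_mem_occs {ls : List (VLabel Sig)} {l : VLabel Sig} {p : ℕ}
    (h : p ∈ occs ls l) : 1 ≤ p := by
  obtain ⟨i, -, rfl⟩ := mem_occs.1 h
  exact Nat.le_add_right 1 _

theorem mem_prefix_iff {p r : List (VLabel Sig)} {σ : Sig} {l : VLabel Sig}
    (hl : isLetterL l = false) :
    l ∈ p ↔ ∃ a ∈ occs (p ++ .letter σ :: r) l, a ≤ posEnd p := by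
  have hσ : VLabel.letter σ ≠ l := by rintro rfl; simp [isLetterL] at hl
  rw [occs_append, occs_cons, if_neg hσ]
  constructor
  · intro h
    obtain ⟨a, ha⟩ := List.exists_mem_of_ne_nil _ (mt occs_eq_nil_iff.1 (not_not.2 h))
    exact ⟨a, List.mem_append_left _ ha, le_posEnd_of_mem_occs ha⟩
  · rintro ⟨a, ha, hle⟩
    rcases List.mem_append.1 ha with ha | ha
    · by_contra h
      simp [occs_eq_nil_iff.2 h] at ha
    · simp only [List.nil_append, List.map_map, List.mem_map, Function.comp_apply] at ha
      obtain ⟨b, hb, rfl⟩ := ha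
      have := one_le_of_mem_occs hb
      simp [isLetterL, posEnd] at hle
      omega

def trace (ls : List (VLabel Sig)) (x : ℕ) (k : Bool) : List ℕ := occs ls (opLabel k x)

def TraceValid (t : Bool → List ℕ) : Prop :=
  (t false = [] ∧ t true = []) ∨ ∃ a b, a ≤ b ∧ t false = [a] ∧ t true = [b]

def traceSpan (t : Bool → List ℕ) : Option Span :=
  match t false, t true with
  | a :: _, b :: _ => some (a, b)
  | _, _ => none

theorem occValid_iff {o c : List ℕ} :
    (o.length ≤ 1 ∧ c.length ≤ 1 ∧ (o = [] ↔ c = []) ∧ ∀ a ∈ o, ∀ b ∈ c, a ≤ b) ↔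
      (o = [] ∧ c = []) ∨ ∃ a b, a ≤ b ∧ o = [a] ∧ c = [b] := by
  rcases o with _ | ⟨a, _ | ⟨a', o⟩⟩ <;> rcases c with _ | ⟨b, _ | ⟨b', c⟩⟩ <;> simp

theorem validLabels_iff {ls : List (VLabel Sig)} :
    ValidLabels ls ↔ ∀ x, TraceValid (trace ls x) := by
  refine forall_congr' fun x => ?_
  rw [TraceValid, ← occValid_iff]
  simp only [trace, opLabel, length_occs, occs_eq_nil_iff, not_iff_not]
  refine and_congr_right' (and_congr_right' (and_congr_right' ?_))
  exact ⟨fun h a ha b hb => by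
      obtain ⟨i, hi, rfl⟩ := mem_occs.1 ha
      obtain ⟨j, hj, rfl⟩ := mem_occs.1 hb
      exact h i j hi hj,
    fun h i j hi hj => h _ (mem_occs.2 ⟨i, hi, rfl⟩) _ (mem_occs.2 ⟨j, hj, rfl⟩)⟩

theorem runMapping_eq_traceSpan {ls : List (VLabel Sig)} {x : ℕ} (h : TraceValid (trace ls x)) :
    runMapping ls x = traceSpan (trace ls x) := by
  rcases h with ⟨ho, -⟩ | ⟨a, b, -, ho, hc⟩
  · have : (VLabel.openv x : VLabel Sig) ∉ ls := occs_eq_nil_iff.1 ho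
    simp [runMapping, traceSpan, this, ho]
  · have hmo : (VLabel.openv x : VLabel Sig) ∈ ls := by
      by_contra h; simp [trace, opLabel, occs_eq_nil_iff.2 h] at ho
    have hmc : (VLabel.closev x : VLabel Sig) ∈ ls := by
      by_contra h; simp [trace, opLabel, occs_eq_nil_iff.2 h] at hc
    have h1 := head?_occs hmo
    have h2 := head?_occs hmc
    simp only [trace, opLabel] at ho hc
    rw [ho] at h1
    rw [hc] at h2
    simp only [List.head?_cons, Option.some.injEq] at h1 h2
    simp [runMapping, traceSpan, hmo, trace, opLabel, ho, hc, h1, h2]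

def pushPos (t : Bool → List ℕ) (e : Option Bool) (E : ℕ) (k : Bool) : List ℕ :=
  t k ++ if e = some k then [E] else []

@[simp] theorem pushPos_none (t : Bool → List ℕ) (E : ℕ) : pushPos t none E = t := by
  funext k; simp [pushPos]

theorem trace_snoc (ls : List (VLabel Sig)) (l : VLabel Sig) (y : ℕ) :
    trace (ls ++ [l]) y = pushPos (trace ls y) (kindOf l y) (posEnd ls) := by
  funext k
  simp only [trace, pushPos, occs_snoc, kindOf_eq_some]

theorem mem_varsOf {A : VA Sig} {q q' : ℕ} {l : VLabel Sig} {y : ℕ} (h : (q, l, q') ∈ A.δ)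
    (hy : kindOf l y ≠ none) : y ∈ varsOf A :=
  Finset.mem_biUnion.2 ⟨(q, l, q'), h, mem_labelVars_of_kindOf hy⟩

theorem VA.PathFrom.append {A : VA Sig} {p q r : ℕ} {u v : List (VLabel Sig)}
    (h1 : VA.PathFrom A p u q) (h2 : VA.PathFrom A q v r) : VA.PathFrom A p (u ++ v) r := by
  induction h1 with
  | nil => simpa
  | cons h _ ih => exact .cons h (ih h2)

theorem VA.PathFrom.single {A : VA Sig} {p q : ℕ} {l : VLabel Sig} (h : (p, l, q) ∈ A.δ) :
    VA.PathFrom A p [l] q := .cons h (.nil q)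

/-! ### The status of a shared variable -/

/-- What the product automaton remembers about one variable.  In `shared f1 f2`, `fi k` records
whether component `i` has already performed operation `k`; in `excl b` the variable has been
claimed by component 1 (`b = true`) or 2 (`b = false`), and the other component may not use it. -/
inductive VarStatus where
  | shared (f1 f2 : Bool → Bool)
  | excl (first : Bool)
deriving Fintype

namespace VarStatus

def start : VarStatus := shared (fun _ => false) (fun _ => false)

def swap : VarStatus → VarStatus
  | shared f1 f2 => shared f2 f1
  | excl b => excl (!b)

@[simp] theorem swap_swap (s : VarStatus) : s.swap.swap = s := by
  cases s <;> simp [swap]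

def Synced : VarStatus → Prop
  | shared f1 f2 => f1 = f2
  | excl _ => True

theorem Synced.swap {s : VarStatus} (h : s.Synced) : s.swap.Synced := by
  cases s <;> simp_all [VarStatus.swap, Synced]

/-- The effect on the status of one variable of a move of component 1 that performs `e` on it
(`none`: no operation, `some k`: operation `k`) while the joint run performs `em` on it. -/
inductive Step : VarStatus → Option Bool → Option Bool → VarStatus → Prop
  | idle (s : VarStatus) : Step s none none s
  | shared {f g : Bool → Bool} {k : Bool} (hf : f k = false) :
      Step (shared f g) (some k) (if g k then none else some k)
        (shared (Function.update f k true) g)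
  | claim (k : Bool) : Step start (some k) (some k) (excl true)
  | excl (k : Bool) : Step (excl true) (some k) (some k) (excl true)

theorem Step.excl_self (e : Option Bool) : Step (.excl true) e e (.excl true) := by
  cases e with
  | none => exact .idle _
  | some k => exact .excl k

end VarStatus

def posIf (b : Bool) (a : ℕ) : List ℕ := if b then [a] else []

@[simp] theorem posIf_false (a : ℕ) : posIf false a = [] := rfl
@[simp] theorem posIf_true (a : ℕ) : posIf true a = [a] := rfl

open VarStatus in
/-- How the status of a variable constrains its traces `t1`, `t2` in the two components and
`t` in the joint run, `E` being the current position. The joint run performs a shared operation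
together with whichever component performs it first; the other one must then follow before the
next letter. -/
def StatusInv : VarStatus → (Bool → List ℕ) → (Bool → List ℕ) → (Bool → List ℕ) → ℕ → Prop
  | shared f1 f2, t1, t2, t, E => ∀ k, ∃ a, t1 k = posIf (f1 k) a ∧ t2 k = posIf (f2 k) a ∧
      t k = posIf (f1 k || f2 k) a ∧ (f1 k ≠ f2 k → a = E)
  | excl true, t1, t2, t, _ => (∀ k, t2 k = []) ∧ t = t1
  | excl false, t1, t2, t, _ => (∀ k, t1 k = []) ∧ t = t2

namespace StatusInv

variable {s s' : VarStatus} {t1 t2 t : Bool → List ℕ} {E : ℕ}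

theorem swap : StatusInv s.swap t2 t1 t E ↔ StatusInv s t1 t2 t E := by
  rcases s with ⟨f1, f2⟩ | _ | _
  · simp only [VarStatus.swap, StatusInv, Bool.or_comm, ne_comm]
    exact forall_congr' fun k => exists_congr fun a => by tauto
  · rfl
  · rfl

theorem start : StatusInv .start (fun _ => []) (fun _ => []) (fun _ => []) E :=
  fun _ => ⟨0, by simp⟩

theorem step {e em : Option Bool} (h : StatusInv s t1 t2 t E) (hs : VarStatus.Step s e em s') :
    StatusInv s' (pushPos t1 e E) t2 (pushPos t em E) E := by
  cases hs with
  | idle => simpa using h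
  | @shared f g k hf =>
    intro j
    obtain ⟨a, h1, h2, h3, h4⟩ := h j
    by_cases hj : j = k
    · subst hj
      refine ⟨E, ?_, ?_, ?_, fun _ => rfl⟩
      · simp [pushPos, h1, hf]
      · cases hg : g j <;> simp_all
      · cases hg : g j <;> simp_all [pushPos]
    · have hkj : some k ≠ some j := by simpa using Ne.symm hj
      refine ⟨a, ?_, h2, ?_, ?_⟩
      · simp [pushPos, hkj, h1, Function.update_of_ne hj]
      · split_ifs <;> simp [pushPos, hkj, h3, Function.update_of_ne hj]
      · simpa [Function.update_of_ne hj] using h4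
  | claim k =>
    have h0 : ∀ j, t1 j = [] ∧ t2 j = [] ∧ t j = [] := fun j => by
      obtain ⟨a, h1, h2, h3, -⟩ := h j
      exact ⟨by simpa [VarStatus.start] using h1, by simpa [VarStatus.start] using h2,
        by simpa [VarStatus.start] using h3⟩
    refine ⟨fun j => (h0 j).2.1, ?_⟩
    funext j
    simp [pushPos, (h0 j).1, (h0 j).2.2]
  | excl k =>
    obtain ⟨h2, rfl⟩ := h
    exact ⟨h2, rfl⟩

theorem letter (h : StatusInv s t1 t2 t E) (hs : s.Synced) : StatusInv s t1 t2 t (E + 1) := by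
  rcases s with ⟨f1, f2⟩ | _ | _
  · intro k
    obtain ⟨a, h1, h2, h3, -⟩ := h k
    exact ⟨a, h1, h2, h3, fun hne => absurd (congrFun hs k) hne⟩
  · exact h
  · exact h

theorem join (h : StatusInv s t1 t2 t E) (h1 : TraceValid t1) (h2 : TraceValid t2) :
    TraceValid t ∧ traceSpan t = (traceSpan t1).or (traceSpan t2) ∧
      ∀ s1 s2, traceSpan t1 = some s1 → traceSpan t2 = some s2 → s1 = s2 := by
  rcases s with ⟨f1, f2⟩ | _ | _
  · obtain ⟨a, ha1, ha2, ha3, -⟩ := h false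
    obtain ⟨b, hb1, hb2, hb3, -⟩ := h true
    rcases h1 with ⟨h1o, h1c⟩ | ⟨a1, b1, hab1, h1o, h1c⟩ <;>
    rcases h2 with ⟨h2o, h2c⟩ | ⟨a2, b2, hab2, h2o, h2c⟩ <;>
    · simp only [posIf] at ha1 ha2 ha3 hb1 hb2 hb3
      split_ifs at ha1 ha2 ha3 hb1 hb2 hb3 <;>
        simp_all [TraceValid, traceSpan]
  · obtain ⟨h1', rfl⟩ := h
    simp [traceSpan, h1', h2]
  · obtain ⟨h2', rfl⟩ := h
    simp [traceSpan, h2', h1]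

end StatusInv

theorem mem_statesOf_tgt {A : VA Sig} {p q : ℕ} {l : VLabel Sig} (h : (p, l, q) ∈ A.δ) :
    q ∈ statesOf A := by
  simp only [statesOf, Finset.mem_insert, Finset.mem_union, Finset.mem_image]
  exact .inr (.inr ⟨(p, l, q), h, rfl⟩)

theorem F_subset_statesOf (A : VA Sig) : A.F ⊆ statesOf A := fun _ hq => by
  simp only [statesOf, Finset.mem_insert, Finset.mem_union]
  exact .inr (.inl (.inl hq))

theorem VA.PathFrom.mem_statesOf {A : VA Sig} {q q' : ℕ} {ls : List (VLabel Sig)}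
    (h : VA.PathFrom A q ls q') (hq : q ∈ statesOf A) : q' ∈ statesOf A := by
  induction h with
  | nil => exact hq
  | cons ht _ ih => exact ih (mem_statesOf_tgt ht)

/-! ### The product construction -/

abbrev Cfg (K : Finset ℕ) : Type := K → VarStatus

section Product

variable {K : Finset ℕ}

def swapCfg (c : Cfg K) : Cfg K := fun y => (c y).swap

@[simp] theorem swapCfg_swapCfg (c : Cfg K) : swapCfg (swapCfg c) = c := by
  funext y; simp [swapCfg]

variable (K) (A : VA Sig)

/-- A non-letter move of a component automaton `A` (seen as component 1) in the product for
the tracked variables `K`: `A` reads `l` while the joint run reads `m`. -/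
inductive Move : Cfg K → ℕ → VLabel Sig → VLabel Sig → Cfg K → ℕ → Prop
  | eps {c q q'} (h : (q, .eps, q') ∈ A.δ) : Move c q .eps .eps c q'
  | free {c q q' k x} (hx : x ∉ K) (h : (q, opLabel k x, q') ∈ A.δ) :
      Move c q (opLabel k x) (opLabel k x) c q'
  | shared {c q q' k x f g} (hx : x ∈ K) (hc : c ⟨x, hx⟩ = .shared f g) (hf : f k = false)
      (h : (q, opLabel k x, q') ∈ A.δ) :
      Move c q (opLabel k x) (if g k then .eps else opLabel k x)
        (Function.update c ⟨x, hx⟩ (.shared (Function.update f k true) g)) q'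
  | claim {c q q' k x} (hx : x ∈ K) (hc : c ⟨x, hx⟩ = .start) (h : (q, opLabel k x, q') ∈ A.δ) :
      Move c q (opLabel k x) (opLabel k x) (Function.update c ⟨x, hx⟩ (.excl true)) q'
  | excl {c q q' k x} (hx : x ∈ K) (hc : c ⟨x, hx⟩ = .excl true)
      (h : (q, opLabel k x, q') ∈ A.δ) :
      Move c q (opLabel k x) (opLabel k x) c q'

variable {K A}

namespace Move

variable {c c' : Cfg K} {q q' : ℕ} {l m : VLabel Sig}

theorem mem_δ (h : Move K A c q l m c' q') : (q, l, q') ∈ A.δ := by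
  cases h <;> assumption

theorem not_letter (h : Move K A c q l m c' q') : isLetterL l = false ∧ isLetterL m = false := by
  cases h <;> (try split) <;> exact ⟨by first | rfl | simp, by first | rfl | simp⟩

theorem varStep (h : Move K A c q l m c' q') (y : ℕ) (hy : y ∈ K) :
    VarStatus.Step (c ⟨y, hy⟩) (kindOf l y) (kindOf m y) (c' ⟨y, hy⟩) := by
  cases h with
  | eps => exact .idle _
  | free hx =>
    rw [kindOf_opLabel, if_neg (by rintro rfl; exact hx hy)]
    exact .idle _
  | @shared _ k x f g hx hc hf =>
    by_cases hxy : x = y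
    · subst hxy
      rw [Function.update_self, hc]
      convert VarStatus.Step.shared (g := g) hf using 1 <;> cases g k <;> simp [kindOf_opLabel]
    · have hne : (⟨y, hy⟩ : K) ≠ ⟨x, hx⟩ := by simpa [Subtype.ext_iff] using Ne.symm hxy
      rw [Function.update_of_ne hne]
      split <;> simp only [kindOf_opLabel, kindOf_eps, if_neg hxy] <;> exact .idle _
  | @claim _ k x hx hc =>
    by_cases hxy : x = y
    · subst hxy
      rw [Function.update_self, hc, kindOf_opLabel, if_pos rfl]
      exact .claim k
    · have hne : (⟨y, hy⟩ : K) ≠ ⟨x, hx⟩ := by simpa [Subtype.ext_iff] using Ne.symm hxy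
      rw [Function.update_of_ne hne, kindOf_opLabel, if_neg hxy]
      exact .idle _
  | @excl _ k x hx hc =>
    rw [kindOf_opLabel]
    split_ifs with hxy
    · subst hxy
      rw [hc]
      exact .excl k
    · exact .idle _

theorem label_eq (h : Move K A c q l m c' q') : m = .eps ∨ m = l := by
  cases h <;> (try split) <;> simp

theorem kindOf_eq_of_not_mem (h : Move K A c q l m c' q') {y : ℕ} (hy : y ∉ K) :
    kindOf m y = kindOf l y := by
  cases h with
  | @shared _ k x f g hx =>
    have hxy : x ≠ y := by rintro rfl; exact hy hx
    split <;> simp [kindOf_opLabel, hxy]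
  | _ => rfl

end Move

variable (K) (A1 A2 : VA Sig)

abbrev ProdState : Type := Cfg K × ℕ × ℕ

/-- A step of the product automaton: the joint run reads `m` while the components read `w1` and
`w2`. -/
inductive ProdStep :
    ProdState K → VLabel Sig → List (VLabel Sig) → List (VLabel Sig) → ProdState K → Prop
  | left {c q1 q2 l m c' q1'} (h : Move K A1 c q1 l m c' q1') :
      ProdStep (c, q1, q2) m [l] [] (c', q1', q2)
  | right {c q1 q2 l m c' q2'} (h : Move K A2 (swapCfg c) q2 l m (swapCfg c') q2') :
      ProdStep (c, q1, q2) m [] [l] (c', q1, q2')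
  | letter {c q1 q2 q1' q2' σ} (h1 : (q1, .letter σ, q1') ∈ A1.δ)
      (h2 : (q2, .letter σ, q2') ∈ A2.δ) (hc : ∀ y, (c y).Synced) :
      ProdStep (c, q1, q2) (.letter σ) [.letter σ] [.letter σ] (c, q1', q2')

inductive ProdRun :
    ProdState K → List (VLabel Sig) → List (VLabel Sig) → List (VLabel Sig) → ProdState K → Prop
  | nil (s : ProdState K) : ProdRun s [] [] [] s
  | cons {s s' s'' m w1 w2 ls ls1 ls2} (h : ProdStep K A1 A2 s m w1 w2 s')
      (hr : ProdRun s' ls ls1 ls2 s'') : ProdRun s (m :: ls) (w1 ++ ls1) (w2 ++ ls2) s''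

/-- A variable outside `K` is treated as claimed by the only component that can use it. -/
def ProdInv (c : Cfg K) (ls ls1 ls2 : List (VLabel Sig)) : Prop :=
  readWord ls1 = readWord ls ∧ readWord ls2 = readWord ls ∧
  (∀ y (hy : y ∈ K), StatusInv (c ⟨y, hy⟩) (trace ls1 y) (trace ls2 y) (trace ls y) (posEnd ls)) ∧
  ∀ y ∉ K,
    (y ∉ varsOf A2 → StatusInv (.excl true) (trace ls1 y) (trace ls2 y) (trace ls y) (posEnd ls)) ∧
    (y ∉ varsOf A1 → StatusInv (.excl false) (trace ls1 y) (trace ls2 y) (trace ls y) (posEnd ls))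

variable {K A1 A2}

theorem ProdStep.path1 {s s' : ProdState K} {m : VLabel Sig} {w1 w2 : List (VLabel Sig)}
    (h : ProdStep K A1 A2 s m w1 w2 s') : VA.PathFrom A1 s.2.1 w1 s'.2.1 := by
  cases h with
  | left h => exact .single h.mem_δ
  | right => exact .nil _
  | letter h1 => exact .single h1

theorem ProdStep.swap {s s' : ProdState K} {m : VLabel Sig} {w1 w2 : List (VLabel Sig)}
    (h : ProdStep K A1 A2 s m w1 w2 s') :
    ProdStep K A2 A1 (swapCfg s.1, s.2.2, s.2.1) m w2 w1 (swapCfg s'.1, s'.2.2, s'.2.1) := by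
  cases h with
  | left h => exact .right (by simpa using h)
  | right h => exact .left h
  | letter h1 h2 hc => exact .letter h2 h1 fun y => (hc y).swap

theorem ProdRun.swap {s s' : ProdState K} {ls ls1 ls2 : List (VLabel Sig)}
    (h : ProdRun K A1 A2 s ls ls1 ls2 s') :
    ProdRun K A2 A1 (swapCfg s.1, s.2.2, s.2.1) ls ls2 ls1 (swapCfg s'.1, s'.2.2, s'.2.1) := by
  induction h with
  | nil => exact .nil _
  | cons h _ ih => exact .cons h.swap ih

theorem ProdRun.path1 {s s' : ProdState K} {ls ls1 ls2 : List (VLabel Sig)}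
    (h : ProdRun K A1 A2 s ls ls1 ls2 s') : VA.PathFrom A1 s.2.1 ls1 s'.2.1 := by
  induction h with
  | nil => exact .nil _
  | cons h _ ih => exact h.path1.append ih

theorem ProdRun.path2 {s s' : ProdState K} {ls ls1 ls2 : List (VLabel Sig)}
    (h : ProdRun K A1 A2 s ls ls1 ls2 s') : VA.PathFrom A2 s.2.2 ls2 s'.2.2 :=
  h.swap.path1

namespace ProdInv

variable {c c' : Cfg K} {ls ls1 ls2 : List (VLabel Sig)}

theorem start : ProdInv K A1 A2 (fun _ => .start) [] [] [] :=
  ⟨rfl, rfl, fun _ _ => StatusInv.start, fun _ _ => ⟨fun _ => ⟨fun _ => rfl, rfl⟩,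
    fun _ => ⟨fun _ => rfl, rfl⟩⟩⟩

theorem swap : ProdInv K A2 A1 (swapCfg c) ls ls2 ls1 ↔ ProdInv K A1 A2 c ls ls1 ls2 := by
  simp only [ProdInv, swapCfg]
  refine and_left_comm.trans (and_congr_right' (and_congr_right' (and_congr ?_ ?_)))
  · exact forall₂_congr fun y hy => StatusInv.swap
  · exact forall₂_congr fun y hy => and_comm.trans (and_congr
      (imp_congr_right fun _ => StatusInv.swap (s := .excl true))
      (imp_congr_right fun _ => StatusInv.swap (s := .excl false)))

theorem move {q q' : ℕ} {l m : VLabel Sig} (h : ProdInv K A1 A2 c ls ls1 ls2)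
    (hm : Move K A1 c q l m c' q') : ProdInv K A1 A2 c' (ls ++ [m]) (ls1 ++ [l]) ls2 := by
  obtain ⟨hw1, hw2, hK, hfree⟩ := h
  obtain ⟨hl, hm'⟩ := hm.not_letter
  have hE : posEnd ls1 = posEnd ls := by simp only [posEnd_eq_length_readWord, hw1]
  refine ⟨?_, ?_, fun y hy => ?_, fun y hy => ⟨fun h2 => ?_, fun h1 => ?_⟩⟩
  · simp only [readWord_append, readWord_singleton_of_not_letter hl,
      readWord_singleton_of_not_letter hm', hw1]
  · simp only [readWord_append, readWord_singleton_of_not_letter hm', hw2, List.append_nil]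
  all_goals rw [trace_snoc, trace_snoc, posEnd_snoc_of_not_letter hm', hE]
  · exact (hK y hy).step (hm.varStep y hy)
  · rw [hm.kindOf_eq_of_not_mem hy]
    exact ((hfree y hy).1 h2).step (.excl_self _)
  · have hnone : kindOf l y = none := by
      by_contra hne; exact h1 (mem_varsOf hm.mem_δ hne)
    rw [hm.kindOf_eq_of_not_mem hy, hnone, pushPos_none, pushPos_none]
    exact (hfree y hy).2 h1

theorem letter {σ : Sig} (h : ProdInv K A1 A2 c ls ls1 ls2) (hc : ∀ y, (c y).Synced) :
    ProdInv K A1 A2 c (ls ++ [.letter σ]) (ls1 ++ [.letter σ]) (ls2 ++ [.letter σ]) := by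
  obtain ⟨hw1, hw2, hK, hfree⟩ := h
  have hE : posEnd (ls ++ [.letter σ]) = posEnd ls + 1 := by simp [posEnd, isLetterL]; omega
  refine ⟨by simp [readWord_append, hw1], by simp [readWord_append, hw2],
    fun y hy => ?_, fun y hy => ?_⟩ <;> simp only [trace_snoc, kindOf_letter, pushPos_none, hE]
  · exact (hK y hy).letter (hc _)
  · exact hfree y hy

end ProdInv

theorem ProdStep.prodInv {s s' : ProdState K} {m : VLabel Sig} {w1 w2 ls ls1 ls2 : List (VLabel Sig)}
    (h : ProdInv K A1 A2 s.1 ls ls1 ls2) (hs : ProdStep K A1 A2 s m w1 w2 s') :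
    ProdInv K A1 A2 s'.1 (ls ++ [m]) (ls1 ++ w1) (ls2 ++ w2) := by
  cases hs with
  | left hm => simpa using h.move hm
  | right hm => simpa using ProdInv.swap.1 ((ProdInv.swap.2 h).move hm)
  | letter _ _ hc => exact h.letter hc

theorem ProdRun.prodInv {s s' : ProdState K} {ls ls1 ls2 p p1 p2 : List (VLabel Sig)}
    (hr : ProdRun K A1 A2 s ls ls1 ls2 s') (h : ProdInv K A1 A2 s.1 p p1 p2) :
    ProdInv K A1 A2 s'.1 (p ++ ls) (p1 ++ ls1) (p2 ++ ls2) := by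
  induction hr generalizing p p1 p2 with
  | nil => simpa using h
  | cons hs _ ih => simpa using ih (hs.prodInv h)

theorem ProdRun.sound (hK : varsOf A1 ∩ varsOf A2 ⊆ K) {q1 q2 : ℕ} {s' : ProdState K}
    {ls ls1 ls2 : List (VLabel Sig)} (hr : ProdRun K A1 A2 (fun _ => .start, q1, q2) ls ls1 ls2 s')
    (hv1 : ValidLabels ls1) (hv2 : ValidLabels ls2) :
    readWord ls1 = readWord ls ∧ readWord ls2 = readWord ls ∧ ValidLabels ls ∧
      Compatible (runMapping ls1) (runMapping ls2) ∧
      runMapping ls = munion (runMapping ls1) (runMapping ls2) := by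
  have hg : ProdInv K A1 A2 s'.1 ls ls1 ls2 := by simpa using hr.prodInv ProdInv.start
  have hinv : ∀ y, ∃ s, StatusInv s (trace ls1 y) (trace ls2 y) (trace ls y) (posEnd ls) := by
    intro y
    by_cases hy : y ∈ K
    · exact ⟨_, hg.2.2.1 y hy⟩
    by_cases h2 : y ∈ varsOf A2
    · exact ⟨_, (hg.2.2.2 y hy).2 fun h1 => hy (hK (Finset.mem_inter.2 ⟨h1, h2⟩))⟩
    · exact ⟨_, (hg.2.2.2 y hy).1 h2⟩
  rw [validLabels_iff] at hv1 hv2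
  have hj := fun y => (hinv y).choose_spec.join (hv1 y) (hv2 y)
  refine ⟨hg.1, hg.2.1, validLabels_iff.2 fun y => (hj y).1, fun y s1 s2 h1 h2 => ?_,
    funext fun y => ?_⟩
  · rw [runMapping_eq_traceSpan (hv1 y)] at h1
    rw [runMapping_eq_traceSpan (hv2 y)] at h2
    exact (hj y).2.2 s1 s2 h1 h2
  · rw [munion_apply, runMapping_eq_traceSpan (hv1 y), runMapping_eq_traceSpan (hv2 y),
      runMapping_eq_traceSpan (hj y).1, (hj y).2.1]

end Product

/-! ### Merging two compatible runs -/

theorem count_opLabel_le_one {ls : List (VLabel Sig)} (hv : ValidLabels ls) (k : Bool) (x : ℕ) :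
    ls.count (opLabel k x) ≤ 1 := by
  cases k
  · exact (hv x).1
  · exact (hv x).2.1

theorem not_mem_of_count_le_one {p r : List (VLabel Sig)} {l : VLabel Sig}
    (h : (p ++ l :: r).count l ≤ 1) : l ∉ p := by
  rw [List.count_append, List.count_cons_self] at h
  exact List.count_eq_zero.1 (by omega)

instance (ls : List (VLabel Sig)) (y : ℕ) : Decidable (touches ls y) :=
  inferInstanceAs (Decidable (∃ k : Bool, opLabel k y ∈ ls))

def flagsOf (ls : List (VLabel Sig)) (y : ℕ) (k : Bool) : Bool := decide (opLabel k y ∈ ls)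

theorem flagsOf_eq_false {ls : List (VLabel Sig)} {y : ℕ} (h : ¬ touches ls y) :
    flagsOf ls y = fun _ => false := by
  funext k
  simpa [flagsOf] using fun hk => h ⟨k, hk⟩

theorem flagsOf_snoc_of_kindOf {ls : List (VLabel Sig)} {l : VLabel Sig} {y : ℕ}
    (hl : kindOf l y = none) : flagsOf (ls ++ [l]) y = flagsOf ls y := by
  funext k
  have : l ≠ opLabel k y := fun h => by simp [kindOf_eq_some.2 h] at hl
  simp [flagsOf, Ne.symm this]

theorem flagsOf_snoc_opLabel (ls : List (VLabel Sig)) (k : Bool) (y : ℕ) :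
    flagsOf (ls ++ [opLabel k y]) y = Function.update (flagsOf ls y) k true := by
  funext j
  by_cases hj : j = k
  · subst hj; simp [flagsOf]
  · simp [flagsOf, opLabel_inj, hj]

theorem touches_iff_trace {ls : List (VLabel Sig)} {y : ℕ} :
    touches ls y ↔ ∃ k, trace ls y k ≠ [] := by
  simp [touches, trace, occs_eq_nil_iff]

theorem trace_eq_of_compatible {ls1 ls2 : List (VLabel Sig)} {y : ℕ}
    (hv1 : TraceValid (trace ls1 y)) (hv2 : TraceValid (trace ls2 y))
    (hc : Compatible (runMapping ls1) (runMapping ls2))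
    (ht1 : touches ls1 y) (ht2 : touches ls2 y) : trace ls1 y = trace ls2 y := by
  have hc := hc y
  rw [runMapping_eq_traceSpan hv1, runMapping_eq_traceSpan hv2] at hc
  rw [touches_iff_trace] at ht1 ht2
  obtain ⟨k1, hk1⟩ := ht1
  obtain ⟨k2, hk2⟩ := ht2
  rcases hv1 with ⟨h1o, h1c⟩ | ⟨a1, b1, -, h1o, h1c⟩
  · cases k1 <;> simp_all
  rcases hv2 with ⟨h2o, h2c⟩ | ⟨a2, b2, -, h2o, h2c⟩
  · cases k2 <;> simp_all
  have := hc (a1, b1) (a2, b2) (by simp [traceSpan, h1o, h1c]) (by simp [traceSpan, h2o, h2c])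
  simp only [Prod.mk.injEq] at this
  funext k
  cases k <;> simp [h1o, h1c, h2o, h2c, this]

/-- The status of `y` after the prefixes `p1` of `ls1` and `p2` of `ls2` have been read: a
variable used by only one of the two runs is claimed by it at its first operation. -/
def statusAt (ls1 ls2 p1 p2 : List (VLabel Sig)) (y : ℕ) : VarStatus :=
  if touches p1 y ∧ ¬ touches ls2 y then .excl true
  else if touches p2 y ∧ ¬ touches ls1 y then .excl false
  else .shared (flagsOf p1 y) (flagsOf p2 y)

def cfgAt (K : Finset ℕ) (ls1 ls2 p1 p2 : List (VLabel Sig)) : Cfg K :=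
  fun y => statusAt ls1 ls2 p1 p2 y

section Merge

variable {K : Finset ℕ} {ls1 ls2 : List (VLabel Sig)}

theorem statusAt_nil (y : ℕ) : statusAt ls1 ls2 [] [] y = .start := by
  have h : ¬ touches ([] : List (VLabel Sig)) y := by simp [touches]
  simp [statusAt, h, flagsOf_eq_false h, VarStatus.start]

theorem swap_statusAt {p1 p2 : List (VLabel Sig)} (h1 : p1 ⊆ ls1) (y : ℕ) :
    (statusAt ls1 ls2 p1 p2 y).swap = statusAt ls2 ls1 p2 p1 y := by
  have h1' : touches p1 y → touches ls1 y := fun ⟨k, hk⟩ => ⟨k, h1 hk⟩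
  unfold statusAt
  split_ifs <;> simp_all [VarStatus.swap]

theorem statusAt_snoc_of_kindOf {p1 p2 : List (VLabel Sig)} {l : VLabel Sig} {y : ℕ}
    (hl : kindOf l y = none) : statusAt ls1 ls2 (p1 ++ [l]) p2 y = statusAt ls1 ls2 p1 p2 y := by
  simp only [statusAt, propext (touches_snoc_of_kindOf hl), flagsOf_snoc_of_kindOf hl]

theorem statusAt_snoc_letter {p1 p2 : List (VLabel Sig)} (σ τ : Sig) (y : ℕ) :
    statusAt ls1 ls2 (p1 ++ [.letter σ]) (p2 ++ [.letter τ]) y = statusAt ls1 ls2 p1 p2 y := by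
  simp only [statusAt, propext (touches_snoc_of_kindOf (kindOf_letter _ y)),
    flagsOf_snoc_of_kindOf (kindOf_letter _ y)]

theorem synced_statusAt (hv1 : ValidLabels ls1) (hv2 : ValidLabels ls2)
    (hc : Compatible (runMapping ls1) (runMapping ls2)) {p1 p2 r1 r2 : List (VLabel Sig)}
    {σ τ : Sig} (h1 : p1 ++ .letter σ :: r1 = ls1) (h2 : p2 ++ .letter τ :: r2 = ls2)
    (hE : posEnd p1 = posEnd p2) (y : ℕ) : (statusAt ls1 ls2 p1 p2 y).Synced := by
  have hsub1 : p1 ⊆ ls1 := h1 ▸ List.subset_append_left _ _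
  have hsub2 : p2 ⊆ ls2 := h2 ▸ List.subset_append_left _ _
  unfold statusAt
  split_ifs with ha hb
  · trivial
  · trivial
  show flagsOf p1 y = flagsOf p2 y
  by_cases ht1 : touches ls1 y
  · by_cases ht2 : touches ls2 y
    · have ht := trace_eq_of_compatible (validLabels_iff.1 hv1 y) (validLabels_iff.1 hv2 y) hc
        ht1 ht2
      funext k
      have e1 : opLabel k y ∈ p1 ↔ _ := h1 ▸ mem_prefix_iff (r := r1) (σ := σ) (by simp)
      have e2 : opLabel k y ∈ p2 ↔ _ := h2 ▸ mem_prefix_iff (r := r2) (σ := τ) (by simp)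
      simp only [flagsOf, decide_eq_decide, e1, e2, hE]
      exact Iff.of_eq (congrArg (fun t => ∃ a ∈ t k, a ≤ posEnd p2) ht)
    · have hp2 : ¬ touches p2 y := fun ⟨k, hk⟩ => ht2 ⟨k, hsub2 hk⟩
      have hp1 : ¬ touches p1 y := fun h => ha ⟨h, ht2⟩
      rw [flagsOf_eq_false hp1, flagsOf_eq_false hp2]
  · have hp1 : ¬ touches p1 y := fun ⟨k, hk⟩ => ht1 ⟨k, hsub1 hk⟩
    have hp2 : ¬ touches p2 y := fun h => hb ⟨h, ht1⟩
    rw [flagsOf_eq_false hp1, flagsOf_eq_false hp2]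

theorem swapCfg_cfgAt {p1 p2 : List (VLabel Sig)} (h1 : p1 ⊆ ls1) :
    swapCfg (cfgAt K ls1 ls2 p1 p2) = cfgAt K ls2 ls1 p2 p1 :=
  funext fun y => swap_statusAt h1 y

theorem cfgAt_snoc_of_kindOf {p1 p2 : List (VLabel Sig)} {l : VLabel Sig}
    (hl : ∀ y ∈ K, kindOf l y = none) :
    cfgAt K ls1 ls2 (p1 ++ [l]) p2 = cfgAt K ls1 ls2 p1 p2 :=
  funext fun y => statusAt_snoc_of_kindOf (hl y y.2)

theorem cfgAt_snoc_opLabel {p1 p2 : List (VLabel Sig)} {k : Bool} {x : ℕ} (hx : x ∈ K) :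
    cfgAt K ls1 ls2 (p1 ++ [opLabel k x]) p2 = Function.update (cfgAt K ls1 ls2 p1 p2) ⟨x, hx⟩
      (statusAt ls1 ls2 (p1 ++ [opLabel k x]) p2 x) := by
  refine Function.eq_update_iff.2 ⟨rfl, fun y hy => statusAt_snoc_of_kindOf ?_⟩
  have : x ≠ y := fun h => hy (Subtype.ext h.symm)
  simp [kindOf_opLabel, this]

theorem exists_move {A : VA Sig} (hv : ValidLabels ls1) {p1 p2 r : List (VLabel Sig)}
    {l : VLabel Sig} {q q' : ℕ} (hp : p1 ++ l :: r = ls1) (h2 : p2 ⊆ ls2)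
    (hl : isLetterL l = false) (ht : (q, l, q') ∈ A.δ) :
    ∃ m, Move K A (cfgAt K ls1 ls2 p1 p2) q l m (cfgAt K ls1 ls2 (p1 ++ [l]) p2) q' := by
  rcases eq_eps_or_opLabel hl with rfl | ⟨k, x, rfl⟩
  · rw [cfgAt_snoc_of_kindOf fun y _ => kindOf_eps y]
    exact ⟨_, .eps ht⟩
  by_cases hx : x ∉ K
  · rw [cfgAt_snoc_of_kindOf fun y hy => by
      simp [kindOf_opLabel, show x ≠ y by rintro rfl; exact hx hy]]
    exact ⟨_, .free hx ht⟩
  rw [not_not] at hx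
  rw [cfgAt_snoc_opLabel hx]
  have hx1 : touches ls1 x := ⟨k, hp ▸ List.mem_append_right _ (List.mem_cons_self ..)⟩
  by_cases hx2 : touches ls2 x
  · have hnot : opLabel k x ∉ p1 := not_mem_of_count_le_one (hp ▸ count_opLabel_le_one hv k x)
    have hc : cfgAt K ls1 ls2 p1 p2 ⟨x, hx⟩ = .shared (flagsOf p1 x) (flagsOf p2 x) := by
      simp [cfgAt, statusAt, hx1, hx2]
    have hnew : statusAt ls1 ls2 (p1 ++ [opLabel k x]) p2 x =
        .shared (Function.update (flagsOf p1 x) k true) (flagsOf p2 x) := by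
      simp [statusAt, hx1, hx2, flagsOf_snoc_opLabel]
    rw [hnew]
    exact ⟨_, .shared hx hc (by simpa [flagsOf] using hnot) ht⟩
  have hnew : statusAt ls1 ls2 (p1 ++ [opLabel k x]) p2 x = .excl true := by
    simp [statusAt, touches_snoc_opLabel, hx2]
  rw [hnew]
  by_cases hx1' : touches p1 x
  · have hc : cfgAt K ls1 ls2 p1 p2 ⟨x, hx⟩ = .excl true := by simp [cfgAt, statusAt, hx1', hx2]
    rw [Function.update_eq_self_iff.2 hc.symm]
    exact ⟨_, .excl hx hc ht⟩
  · have hp2 : ¬ touches p2 x := fun ⟨j, hj⟩ => hx2 ⟨j, h2 hj⟩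
    have hc : cfgAt K ls1 ls2 p1 p2 ⟨x, hx⟩ = .start := by
      simp [cfgAt, statusAt, hx1', hp2, flagsOf_eq_false, VarStatus.start]
    exact ⟨_, .claim hx hc ht⟩

variable {A1 A2 : VA Sig}

/-- The merged run reads, between two letters, first the non-letters of the first run and then
those of the second. -/
theorem exists_prodRun (hv1 : ValidLabels ls1) (hv2 : ValidLabels ls2)
    (hc : Compatible (runMapping ls1) (runMapping ls2)) {f1 f2 : ℕ} :
    ∀ n (r1 r2 p1 p2 : List (VLabel Sig)) (q1 q2 : ℕ), r1.length + r2.length ≤ n →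
      p1 ++ r1 = ls1 → p2 ++ r2 = ls2 → readWord p1 = readWord p2 → readWord r1 = readWord r2 →
      VA.PathFrom A1 q1 r1 f1 → VA.PathFrom A2 q2 r2 f2 →
      ∃ ls c', ProdRun K A1 A2 (cfgAt K ls1 ls2 p1 p2, q1, q2) ls r1 r2 (c', f1, f2) := by
  intro n
  induction n with
  | zero =>
    intro r1 r2 p1 p2 q1 q2 hn _ _ _ _ hp1 hp2
    obtain ⟨rfl, rfl⟩ : r1 = [] ∧ r2 = [] := by simp_all
    cases hp1; cases hp2
    exact ⟨[], _, .nil _⟩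
  | succ n ih =>
    intro r1 r2 p1 p2 q1 q2 hn h1 h2 hwp hw hp1 hp2
    have hsub1 : p1 ⊆ ls1 := h1 ▸ List.subset_append_left _ _
    have hsub2 : p2 ⊆ ls2 := h2 ▸ List.subset_append_left _ _
    rcases head_cases hw with ⟨l, r1, rfl, hl⟩ | ⟨l, r2, rfl, hl⟩ | ⟨rfl, rfl⟩ |
      ⟨σ, r1, r2, rfl, rfl, hw'⟩
    · cases hp1 with
      | cons ht hp1 =>
      obtain ⟨m, hm⟩ := exists_move hv1 h1 hsub2 hl ht
      obtain ⟨ls, c', hr⟩ := ih r1 r2 (p1 ++ [l]) p2 _ q2 (by simp at hn; omega) (by simpa)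
        h2 (by simp [readWord_append, readWord_singleton_of_not_letter hl, hwp])
        (by rwa [readWord_cons_of_not_letter hl] at hw) hp1 hp2
      exact ⟨m :: ls, c', .cons (.left hm) hr⟩
    · cases hp2 with
      | cons ht hp2 =>
      obtain ⟨m, hm⟩ := exists_move (K := K) hv2 h2 hsub1 hl ht
      rw [← swapCfg_cfgAt hsub1, ← swapCfg_cfgAt hsub1] at hm
      obtain ⟨ls, c', hr⟩ := ih r1 r2 p1 (p2 ++ [l]) q1 _ (by simp at hn; omega) h1
        (by simpa) (by simp [readWord_append, readWord_singleton_of_not_letter hl, hwp])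
        (by rwa [readWord_cons_of_not_letter hl] at hw) hp1 hp2
      exact ⟨m :: ls, c', .cons (.right hm) hr⟩
    · cases hp1; cases hp2
      exact ⟨[], _, .nil _⟩
    · cases hp1 with
      | cons ht1 hp1 =>
      cases hp2 with
      | cons ht2 hp2 =>
      have hE : posEnd p1 = posEnd p2 := by simp only [posEnd_eq_length_readWord, hwp]
      obtain ⟨ls, c', hr⟩ := ih r1 r2 (p1 ++ [.letter σ]) (p2 ++ [.letter σ]) _ _
        (by simp at hn; omega) (by simpa) (by simpa) (by simp [readWord_append, hwp]) hw' hp1 hp2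
      rw [show cfgAt K ls1 ls2 (p1 ++ [.letter σ]) (p2 ++ [.letter σ]) = cfgAt K ls1 ls2 p1 p2
        from funext fun y => statusAt_snoc_letter σ σ y] at hr
      exact ⟨_, c', .cons (.letter ht1 ht2 fun y => synced_statusAt hv1 hv2 hc h1 h2 hE y) hr⟩

end Merge

/-! ### The product automaton -/

section Encoding

variable {α : Type*} (enc : α → ℕ) (S : Finset α) (L : Finset (VLabel Sig))
  (T : α → VLabel Sig → α → Prop) (a0 : α) (final : α → Prop)

open Classical in
noncomputable def VA.ofLTS : VA Sig where
  q0 := enc a0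
  F := (S.filter final).image enc
  δ := ((S ×ˢ L ×ˢ S).filter fun t => T t.1 t.2.1 t.2.2).image fun t => (enc t.1, t.2.1, enc t.2.2)

variable {enc S L T a0 final}

theorem VA.mem_ofLTS_δ (henc : Function.Injective enc) {s : α} {l : VLabel Sig} {p : ℕ} :
    (enc s, l, p) ∈ (VA.ofLTS enc S L T a0 final).δ ↔
      ∃ s', p = enc s' ∧ s ∈ S ∧ l ∈ L ∧ s' ∈ S ∧ T s l s' := by
  simp only [VA.ofLTS, Finset.mem_image, Finset.mem_filter, Finset.mem_product, Prod.exists,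
    Prod.mk.injEq]
  constructor
  · rintro ⟨s0, l0, s', ⟨⟨hs, hl, hs'⟩, hT⟩, he, rfl, rfl⟩
    obtain rfl := henc he
    exact ⟨s', rfl, hs, hl, hs', hT⟩
  · rintro ⟨s', rfl, hs, hl, hs', hT⟩
    exact ⟨s, l, s', ⟨⟨hs, hl, hs'⟩, hT⟩, rfl, rfl, rfl⟩

theorem VA.mem_ofLTS_F (henc : Function.Injective enc) {s : α} :
    enc s ∈ (VA.ofLTS enc S L T a0 final).F ↔ s ∈ S ∧ final s := by
  simp [VA.ofLTS, henc.eq_iff]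

open Classical in
theorem VA.vaSize_ofLTS_le (h0 : a0 ∈ S) :
    vaSize (VA.ofLTS enc S L T a0 final) ≤ S.card + S.card * L.card * S.card := by
  have hδ : ∀ t ∈ (VA.ofLTS enc S L T a0 final).δ, t.1 ∈ S.image enc ∧ t.2.2 ∈ S.image enc := by
    intro t ht
    simp only [VA.ofLTS, Finset.mem_image, Finset.mem_filter, Finset.mem_product] at ht
    obtain ⟨u, ⟨⟨hu1, -, hu2⟩, -⟩, rfl⟩ := ht
    exact ⟨Finset.mem_image_of_mem _ hu1, Finset.mem_image_of_mem _ hu2⟩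
  have hstates : statesOf (VA.ofLTS enc S L T a0 final) ⊆ S.image enc := by
    intro q hq
    simp only [statesOf, Finset.mem_insert, Finset.mem_union, Finset.mem_image] at hq
    rcases hq with rfl | ((hF | ⟨t, ht, rfl⟩) | ⟨t, ht, rfl⟩)
    · exact Finset.mem_image_of_mem _ h0
    · simp only [VA.ofLTS, Finset.mem_image, Finset.mem_filter] at hF
      obtain ⟨s, ⟨hs, -⟩, rfl⟩ := hF
      exact Finset.mem_image_of_mem _ hs
    · exact (hδ t ht).1
    · exact (hδ t ht).2
  have hcard : (VA.ofLTS enc S L T a0 final).δ.card ≤ S.card * L.card * S.card := by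
    calc _ ≤ (S ×ˢ L ×ˢ S).card := Finset.card_image_le.trans (Finset.card_filter_le _ _)
      _ = S.card * L.card * S.card := by simp [Finset.card_product, mul_assoc]
  exact Nat.add_le_add ((Finset.card_le_card hstates).trans Finset.card_image_le) hcard

end Encoding

section Automaton

def prodLabels (A1 A2 : VA Sig) : Finset (VLabel Sig) :=
  insert .eps (A1.δ.image (·.2.1) ∪ A2.δ.image (·.2.1))

def prodStates (K : Finset ℕ) (A1 A2 : VA Sig) : Finset (ProdState K) :=
  Finset.univ ×ˢ statesOf A1 ×ˢ statesOf A2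

variable (K : Finset ℕ) (A1 A2 : VA Sig) (enc : ProdState K → ℕ)

noncomputable def prodVA : VA Sig :=
  VA.ofLTS enc (prodStates K A1 A2) (prodLabels A1 A2)
    (fun s m s' => ∃ w1 w2, ProdStep K A1 A2 s m w1 w2 s') (fun _ => .start, A1.q0, A2.q0)
    (fun s => s.2.1 ∈ A1.F ∧ s.2.2 ∈ A2.F)

variable {K A1 A2 enc}

theorem ProdStep.mem_prodLabels {s s' : ProdState K} {m : VLabel Sig} {w1 w2 : List (VLabel Sig)}
    (h : ProdStep K A1 A2 s m w1 w2 s') : m ∈ prodLabels A1 A2 := by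
  have h1 : ∀ {p r l}, (p, l, r) ∈ A1.δ → l ∈ prodLabels A1 A2 := fun h =>
    Finset.mem_insert_of_mem (Finset.mem_union_left _ (Finset.mem_image_of_mem _ h))
  have h2 : ∀ {p r l}, (p, l, r) ∈ A2.δ → l ∈ prodLabels A1 A2 := fun h =>
    Finset.mem_insert_of_mem (Finset.mem_union_right _ (Finset.mem_image_of_mem _ h))
  cases h with
  | left hm => exact hm.label_eq.elim (· ▸ Finset.mem_insert_self _ _) (· ▸ h1 hm.mem_δ)
  | right hm => exact hm.label_eq.elim (· ▸ Finset.mem_insert_self _ _) (· ▸ h2 hm.mem_δ)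
  | letter ht => exact h1 ht

theorem ProdRun.mem_prodStates {s s' : ProdState K} {ls ls1 ls2 : List (VLabel Sig)}
    (hr : ProdRun K A1 A2 s ls ls1 ls2 s') (hs : s ∈ prodStates K A1 A2) :
    s' ∈ prodStates K A1 A2 := by
  simp only [prodStates, Finset.mem_product, Finset.mem_univ, true_and] at hs ⊢
  exact ⟨hr.path1.mem_statesOf hs.1, hr.path2.mem_statesOf hs.2⟩

theorem ProdRun.pathFrom_prodVA (henc : Function.Injective enc) {s s' : ProdState K}
    {ls ls1 ls2 : List (VLabel Sig)} (hr : ProdRun K A1 A2 s ls ls1 ls2 s')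
    (hs : s ∈ prodStates K A1 A2) : VA.PathFrom (prodVA K A1 A2 enc) (enc s) ls (enc s') := by
  induction hr with
  | nil => exact .nil _
  | cons h hr ih =>
    have hs' := (ProdRun.cons h (.nil _)).mem_prodStates hs
    exact .cons ((VA.mem_ofLTS_δ henc).2 ⟨_, rfl, hs, h.mem_prodLabels, hs', _, _, h⟩) (ih hs')

theorem ProdRun.of_pathFrom_prodVA (henc : Function.Injective enc) {s : ProdState K}
    {ls : List (VLabel Sig)} {p : ℕ} (h : VA.PathFrom (prodVA K A1 A2 enc) (enc s) ls p) :
    ∃ ls1 ls2 s', p = enc s' ∧ ProdRun K A1 A2 s ls ls1 ls2 s' := by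
  generalize hp0 : enc s = p0 at h
  induction h generalizing s with
  | nil => exact ⟨[], [], s, hp0.symm, .nil _⟩
  | cons ht _ ih =>
    subst hp0
    obtain ⟨s1, rfl, -, -, -, w1, w2, hstep⟩ := (VA.mem_ofLTS_δ henc).1 ht
    obtain ⟨ls1, ls2, s', rfl, hr⟩ := ih rfl
    exact ⟨w1 ++ ls1, w2 ++ ls2, s', rfl, .cons hstep hr⟩

theorem acceptsWith_prodVA (henc : Function.Injective enc) {ls : List (VLabel Sig)} :
    AcceptsWith (prodVA K A1 A2 enc) ls ↔ ∃ ls1 ls2 s',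
      ProdRun K A1 A2 (fun _ => .start, A1.q0, A2.q0) ls ls1 ls2 s' ∧ s'.2.1 ∈ A1.F ∧
        s'.2.2 ∈ A2.F := by
  constructor
  · rintro ⟨qf, hp, hqf⟩
    obtain ⟨ls1, ls2, s', rfl, hr⟩ := ProdRun.of_pathFrom_prodVA henc hp
    exact ⟨ls1, ls2, s', hr, ((VA.mem_ofLTS_F henc).1 hqf).2⟩
  · rintro ⟨ls1, ls2, s', hr, hf⟩
    have hs' : s' ∈ prodStates K A1 A2 := by
      simp [prodStates, F_subset_statesOf _ hf.1, F_subset_statesOf _ hf.2]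
    refine ⟨enc s', hr.pathFrom_prodVA henc ?_, (VA.mem_ofLTS_F henc).2 ⟨hs', hf⟩⟩
    simp [prodStates, statesOf]

theorem prodVA_sequential (henc : Function.Injective enc) (hK : varsOf A1 ∩ varsOf A2 ⊆ K)
    (h1 : A1.Sequential) (h2 : A2.Sequential) : (prodVA K A1 A2 enc).Sequential := by
  intro ls hacc
  obtain ⟨ls1, ls2, s', hr, hf1, hf2⟩ := (acceptsWith_prodVA henc).1 hacc
  exact (hr.sound hK (h1 _ ⟨_, hr.path1, hf1⟩) (h2 _ ⟨_, hr.path2, hf2⟩)).2.2.1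

theorem vaSem_prodVA (henc : Function.Injective enc) (hK : varsOf A1 ∩ varsOf A2 ⊆ K)
    (h1 : A1.Sequential) (h2 : A2.Sequential) (d : List Sig) :
    vaSem (prodVA K A1 A2 enc) d = joinSet (vaSem A1 d) (vaSem A2 d) := by
  ext μ
  constructor
  · rintro ⟨ls, hacc, rfl, -, rfl⟩
    obtain ⟨ls1, ls2, s', hr, hf1, hf2⟩ := (acceptsWith_prodVA henc).1 hacc
    have hv1 := h1 _ ⟨_, hr.path1, hf1⟩
    have hv2 := h2 _ ⟨_, hr.path2, hf2⟩
    obtain ⟨hw1, hw2, -, hc, hμ⟩ := hr.sound hK hv1 hv2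
    exact ⟨_, ⟨ls1, ⟨_, hr.path1, hf1⟩, hw1, hv1, rfl⟩,
      _, ⟨ls2, ⟨_, hr.path2, hf2⟩, hw2, hv2, rfl⟩, hc, hμ⟩
  · rintro ⟨_, ⟨ls1, ⟨f1, hp1, hf1⟩, rfl, hv1, rfl⟩, _, ⟨ls2, ⟨f2, hp2, hf2⟩, hd, hv2, rfl⟩,
      hc, rfl⟩
    obtain ⟨ls, c', hr⟩ := exists_prodRun (K := K) hv1 hv2 hc _ ls1 ls2 [] [] A1.q0 A2.q0 le_rfl
      rfl rfl rfl hd.symm hp1 hp2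
    rw [show cfgAt K ls1 ls2 [] [] = fun _ => .start from funext fun y => statusAt_nil y] at hr
    obtain ⟨hw1, -, hv, -, hμ⟩ := hr.sound hK hv1 hv2
    exact ⟨ls, (acceptsWith_prodVA henc).2 ⟨ls1, ls2, _, hr, hf1, hf2⟩, hw1.symm, hv, hμ.symm⟩

theorem vaSize_prodVA_le :
    vaSize (prodVA K A1 A2 enc) ≤
      2 * (Fintype.card VarStatus ^ K.card) ^ 2 * (vaSize A1 + vaSize A2 + 1) ^ 5 := by
  set N := vaSize A1 + vaSize A2
  set C := Fintype.card VarStatus ^ K.card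
  have hS : (prodStates K A1 A2).card ≤ C * (N + 1) ^ 2 := by
    have hn1 : (statesOf A1).card ≤ N + 1 := by simp only [N, vaSize]; omega
    have hn2 : (statesOf A2).card ≤ N + 1 := by simp only [N, vaSize]; omega
    rw [prodStates, Finset.card_product, Finset.card_product, Finset.card_univ, Fintype.card_fun,
      Fintype.card_coe, sq]
    gcongr
  have hL : (prodLabels A1 A2).card ≤ N + 1 := by
    calc (prodLabels A1 A2).card ≤ (A1.δ.image (·.2.1)).card + (A2.δ.image (·.2.1)).card + 1 :=
          (Finset.card_insert_le _ _).trans (Nat.add_le_add_right (Finset.card_union_le _ _) 1)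
      _ ≤ A1.δ.card + A2.δ.card + 1 := by gcongr <;> exact Finset.card_image_le
      _ ≤ N + 1 := by simp only [N, vaSize]; omega
  have hC : C ≤ C ^ 2 := Nat.le_self_pow (by norm_num) C
  have hN : (N + 1) ^ 2 ≤ (N + 1) ^ 5 := Nat.pow_le_pow_right (by omega) (by norm_num)
  calc vaSize (prodVA K A1 A2 enc)
      ≤ (prodStates K A1 A2).card + (prodStates K A1 A2).card * (prodLabels A1 A2).card *
          (prodStates K A1 A2).card :=
        VA.vaSize_ofLTS_le (by simp [prodStates, statesOf])
    _ ≤ C * (N + 1) ^ 2 + C * (N + 1) ^ 2 * (N + 1) * (C * (N + 1) ^ 2) := by gcongr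
    _ ≤ C ^ 2 * (N + 1) ^ 5 + C ^ 2 * (N + 1) ^ 5 := by
        rw [show C * (N + 1) ^ 2 * (N + 1) * (C * (N + 1) ^ 2) = C ^ 2 * (N + 1) ^ 5 by ring]
        gcongr
    _ = 2 * C ^ 2 * (N + 1) ^ 5 := by ring

end Automaton

end Spanners

namespace Spanners

variable {Sig : Type} [DecidableEq Sig]

theorem statement6 :
    ∃ (f : ℕ → ℕ) (p : Polynomial ℕ), ∀ A1 A2 : VA Sig, A1.Sequential → A2.Sequential →
      ∃ A : VA Sig, A.Sequential ∧
        (∀ d : List Sig, vaSem A d = joinSet (vaSem A1 d) (vaSem A2 d)) ∧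
        vaSize A ≤ f ((varsOf A1 ∩ varsOf A2).card) * p.eval (vaSize A1 + vaSize A2) := by
  refine ⟨fun k => 2 * Fintype.card VarStatus ^ (2 * k), (Polynomial.X + 1) ^ 5,
    fun A1 A2 h1 h2 => ?_⟩
  obtain ⟨enc, henc⟩ := exists_injective_nat (ProdState (varsOf A1 ∩ varsOf A2))
  refine ⟨prodVA _ A1 A2 enc, prodVA_sequential henc subset_rfl h1 h2,
    vaSem_prodVA henc subset_rfl h1 h2, ?_⟩
  calc vaSize (prodVA _ A1 A2 enc)
      ≤ 2 * (Fintype.card VarStatus ^ (varsOf A1 ∩ varsOf A2).card) ^ 2 *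
          (vaSize A1 + vaSize A2 + 1) ^ 5 := vaSize_prodVA_le
    _ = _ := by simp [← pow_mul, mul_comm]

end Spanners
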